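/- arXiv:2201.06236 — 5 statements merged into one kernel-verified Lean document; each statement's English description precedes it below -/
import Mathlib

section
/- For any codeword c ∈ C, any i ∈ {0, …, n−1}, any v ∈ {1, …, s−1}, any b_1 ≠ b_2 ∈ {1, …, d−k+h} and any a ∈ V_i, setting a' = a(i,v), c̃_j = c_{j,b_1,a} + c_{j,b_2,a'} for j ∈ {0, …, n−1}, and Δ_e = Σ_{j=0}^{n−1} ( δ(a_j) c_{j,b_1,a(j,e)} + δ(a'_j) c_{j,b_2,a'(j,e)} ) for e ∈ {1, …, s−1}, one has Σ_{j=0}^{n−1} λ_j^t c̃_j + Σ_{e=1}^{s−1} μ_e^t Δ_e = 0 for every t ∈ {0, …, r−1}. -/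
open Finset

/-- The code `C` of Construction 1: arrays `c = (c_{i,b,a})` with `i ∈ [0,n)`,
`b ∈ {1,…,B}` (here `B = d-k+h`; entries of `c` with `b` outside this range are
irrelevant), and `a ∈ {0,…,s-1}^n`, satisfying the parity-check equations
`∑_i λ_i^t c_{i,b,a} + ∑_i δ(a_i) ∑_{e=1}^{s-1} μ_e^t c_{i,b,a(i,e)} = 0`
for all `t ∈ [0,r)`, all `b ∈ {1,…,B}`, and all `a`. -/
def codeC {F : Type*} [Field F] (n r s B : ℕ) (lam : Fin n → F) (mu : Fin s → F)
    (c : Fin n → ℕ → (Fin n → Fin s) → F) : Prop :=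
  ∀ t < r, ∀ b : ℕ, 1 ≤ b → b ≤ B → ∀ a : Fin n → Fin s,
    ∑ i, lam i ^ t * c i b a
      + ∑ i, (if (a i : ℕ) = 0 then
          ∑ e ∈ univ.filter (fun e : Fin s => (e : ℕ) ≠ 0),
            mu e ^ t * c i b (Function.update a i e)
        else 0) = 0

/-- For a codeword `c ∈ C`, `i`, `v ≠ 0`, `b₁ ≠ b₂` in `{1,…,d-k+h}`, and
`a ∈ V_i`, the sums `c̃_j = c_{j,b₁,a} + c_{j,b₂,a'}` (with `a' = a(i,v)`) and
`Δ_e = ∑_j (δ(a_j) c_{j,b₁,a(j,e)} + δ(a'_j) c_{j,b₂,a'(j,e)})` satisfy the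
Vandermonde parity-check equations `∑_j λ_j^t c̃_j + ∑_{e=1}^{s-1} μ_e^t Δ_e = 0`
for every `t ∈ [0,r)`. -/
theorem sums_satisfy_vandermonde_parity_checks
    {F : Type*} [Field F] [Fintype F]
    (n k d h r s N : ℕ) (hk0 : 0 < k) (hr0 : 0 < r) (hh : 1 ≤ h)
    (hnk : n = k + r) (hkd : k < d) (hdn : d + h ≤ n)
    (hs : s = d - k + 1) (hN : N = (d - k + h) * s ^ n)
    (lam : Fin n → F) (mu : Fin s → F)
    (hlam : Function.Injective lam)
    (hmu : ∀ e e' : Fin s, (e : ℕ) ≠ 0 → (e' : ℕ) ≠ 0 → mu e = mu e' → e = e')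
    (hlammu : ∀ (i : Fin n) (e : Fin s), (e : ℕ) ≠ 0 → lam i ≠ mu e)
    (c : Fin n → ℕ → (Fin n → Fin s) → F) (hc : codeC n r s (d - k + h) lam mu c)
    (i : Fin n) (v : Fin s) (hv : (v : ℕ) ≠ 0)
    (b1 b2 : ℕ) (hb1 : 1 ≤ b1) (hb1' : b1 ≤ d - k + h)
    (hb2 : 1 ≤ b2) (hb2' : b2 ≤ d - k + h) (hb12 : b1 ≠ b2)
    (a : Fin n → Fin s) (ha : (a i : ℕ) = 0)
    (t : ℕ) (ht : t < r) :
    ∑ j, lam j ^ t * (c j b1 a + c j b2 (Function.update a i v))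
      + ∑ e ∈ univ.filter (fun e : Fin s => (e : ℕ) ≠ 0),
          mu e ^ t *
            (∑ j, ((if (a j : ℕ) = 0 then c j b1 (Function.update a j e) else 0)
              + (if ((Function.update a i v) j : ℕ) = 0 then
                  c j b2 (Function.update (Function.update a i v) j e) else 0))) = 0 := by
  have key : ∀ (b : ℕ) (aa : Fin n → Fin s),
      ∑ j, (if (aa j : ℕ) = 0 then
          ∑ e ∈ univ.filter (fun e : Fin s => (e : ℕ) ≠ 0),
            mu e ^ t * c j b (Function.update aa j e) else 0)
      = ∑ e ∈ univ.filter (fun e : Fin s => (e : ℕ) ≠ 0),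
          mu e ^ t * ∑ j, (if (aa j : ℕ) = 0 then c j b (Function.update aa j e) else 0) := by
    intro b aa
    have step : ∀ j : Fin n,
        (if (aa j : ℕ) = 0 then
            ∑ e ∈ univ.filter (fun e : Fin s => (e : ℕ) ≠ 0),
              mu e ^ t * c j b (Function.update aa j e) else 0)
        = ∑ e ∈ univ.filter (fun e : Fin s => (e : ℕ) ≠ 0),
            (if (aa j : ℕ) = 0 then mu e ^ t * c j b (Function.update aa j e) else 0) := by
      intro j; split_ifs <;> simp
    simp only [step]
    rw [Finset.sum_comm]
    apply Finset.sum_congr rfl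
    intro e _
    rw [Finset.mul_sum]
    apply Finset.sum_congr rfl
    intro j _
    split_ifs <;> simp
  have h1 := hc t ht b1 hb1 hb1' a
  have h2 := hc t ht b2 hb2 hb2' (Function.update a i v)
  rw [key] at h1 h2
  simp only [mul_add, Finset.sum_add_distrib]
  linear_combination h1 + h2
end

section
/- (Lemma 5, first part) Fix i ∈ {0, …, n−1}, b_1 ≠ b_2 ∈ {1, …, d−k+h}, v ∈ {1, …, s−1}, and a helper set R ⊆ {0, …, n−1} \ {i} with |R| = d. If two codewords c, c' ∈ C satisfy c_{u,b_1,a} + c_{u,b_2,a(i,v)} = c'_{u,b_1,a} + c'_{u,b_2,a(i,v)} for all u ∈ R and all a ∈ V_i, then c_{j,b_1,a} + c_{j,b_2,a(i,v)} = c'_{j,b_1,a} + c'_{j,b_2,a(i,v)} for all j ∈ {0, …, n−1} and all a ∈ V_i. -/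
/-!
Let `D = c - c'`, again a codeword, and `G_j(a) = D_{j,b₁,a} + D_{j,b₂,a(i,v)}`. For `a ∈ V_i`,
adding the parity check of layer `b₁` at `a` to that of layer `b₂` at `a(i,v)` pairs the terms
into repair sums: for every `t < r`,
`∑_j λ_j^t G_j(a) + ∑_{e≠0} μ_e^t D_{i,b₁,a(i,e)} + ∑_{j≠i, a_j=0} ∑_{e≠0} μ_e^t G_j(a(j,e)) = 0`.
By induction on the number of zero coordinates of `a` outside `i` the last sum vanishes, and
`G_u(a) = 0` for `u ∈ R`. What is left is a Vandermonde system of `r` equations in the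
`(n - d) + (s - 1) = r` unknowns `G_j(a)` (`j ∉ R`) and `D_{i,b₁,a(i,e)}`, with pairwise distinct
nodes `λ_j`, `μ_e`; so all of them vanish.
-/

open Finset

open Function

theorem Finset.eq_zero_of_forall_sum_pow_mul_eq_zero {R ι : Type*} [CommRing R] [IsDomain R]
    {M : Finset ι} {p x : ι → R} (hp : Set.InjOn p M)
    (h : ∀ t < #M, ∑ m ∈ M, p m ^ t * x m = 0) : ∀ m ∈ M, x m = 0 := by
  let e : Fin #M ≃ M := M.equivFin.symm
  have hv := Matrix.eq_zero_of_forall_pow_sum_mul_pow_eq_zero (f := fun k => p (e k))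
    (v := fun k => x (e k)) (hp.injective.comp e.injective) fun t => by
      rw [← h t t.isLt, ← sum_coe_sort M, ← e.sum_comp]
      exact sum_congr rfl fun _ _ => mul_comm _ _
  intro m hm
  simpa using congrFun hv (e.symm ⟨m, hm⟩)

abbrev nonzeroSymbols (s : ℕ) : Finset (Fin s) := univ.filter fun e : Fin s => (e : ℕ) ≠ 0

theorem card_nonzeroSymbols (s : ℕ) : #(nonzeroSymbols s) = s - 1 := by
  rcases s with _ | s
  · rfl
  · simp [nonzeroSymbols, filter_ne', card_erase_of_mem]

theorem injOn_sumElim_nonzeroSymbols {F : Type*} {n s : ℕ} {lam : Fin n → F} {mu : Fin s → F}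
    (hlam : Injective lam)
    (hmu : ∀ e e' : Fin s, (e : ℕ) ≠ 0 → (e' : ℕ) ≠ 0 → mu e = mu e' → e = e')
    (hlammu : ∀ (i : Fin n) (e : Fin s), (e : ℕ) ≠ 0 → lam i ≠ mu e) :
    Set.InjOn (Sum.elim lam mu) (univ.disjSum (nonzeroSymbols s) : Finset (Fin n ⊕ Fin s)) := by
  rintro (j | e) hm (j' | e') hm' heq <;>
    simp only [mem_coe, inr_mem_disjSum, mem_filter, mem_univ, true_and, Sum.elim_inl,
      Sum.elim_inr] at hm hm' heq
  · rw [hlam heq]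
  · exact absurd heq (hlammu j e' hm')
  · exact absurd heq.symm (hlammu j' e hm)
  · rw [hmu e e' hm hm' heq]

section ParityChecks

variable {F : Type*} [Field F] {n s r : ℕ} {lam : Fin n → F} {mu : Fin s → F}
  {x y : Fin n → (Fin n → Fin s) → F} {i : Fin n} {v : Fin s}

/-- A layer `x j a = c_{j,b,a}` of the code, with `b` fixed, contributes this at node `j` to
its `t`-th parity check at `a`. -/
def parityTerm (lam : Fin n → F) (mu : Fin s → F) (t : ℕ) (x : Fin n → (Fin n → Fin s) → F)
    (a : Fin n → Fin s) (j : Fin n) : F :=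
  lam j ^ t * x j a +
    if (a j : ℕ) = 0 then ∑ e ∈ nonzeroSymbols s, mu e ^ t * x j (update a j e) else 0

def ParityChecks (lam : Fin n → F) (mu : Fin s → F) (r : ℕ)
    (x : Fin n → (Fin n → Fin s) → F) : Prop :=
  ∀ t < r, ∀ a, ∑ j, parityTerm lam mu t x a j = 0

theorem codeC.parityChecks {B : ℕ} {c : Fin n → ℕ → (Fin n → Fin s) → F}
    (hc : codeC n r s B lam mu c) {b : ℕ} (hb : 1 ≤ b) (hb' : b ≤ B) :
    ParityChecks lam mu r fun j => c j b := fun t ht a => by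
  simpa only [parityTerm, sum_add_distrib] using hc t ht b hb hb' a

theorem parityTerm_sub (t : ℕ) (x y : Fin n → (Fin n → Fin s) → F) (a : Fin n → Fin s)
    (j : Fin n) :
    parityTerm lam mu t (x - y) a j = parityTerm lam mu t x a j - parityTerm lam mu t y a j := by
  unfold parityTerm
  split_ifs <;> simp only [Pi.sub_apply, mul_sub, sum_sub_distrib] <;> ring

theorem ParityChecks.sub (hx : ParityChecks lam mu r x) (hy : ParityChecks lam mu r y) :
    ParityChecks lam mu r (x - y) := fun t ht a => by
  simp only [parityTerm_sub, sum_sub_distrib, hx t ht a, hy t ht a, sub_zero]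

/-- What node `j` sends to repair node `i`: `c_{j,b₁,a} + c_{j,b₂,a(i,v)}`. -/
def repairSum (i : Fin n) (v : Fin s) (x y : Fin n → (Fin n → Fin s) → F) (j : Fin n)
    (a : Fin n → Fin s) : F :=
  x j a + y j (update a i v)

def zerosOff (i : Fin n) (a : Fin n → Fin s) : Finset (Fin n) :=
  univ.filter fun j => j ≠ i ∧ (a j : ℕ) = 0

theorem zerosOff_update {a : Fin n → Fin s} {j : Fin n} (hj : j ∈ zerosOff i a) {e : Fin s}
    (he : (e : ℕ) ≠ 0) : zerosOff i (update a j e) = (zerosOff i a).erase j := by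
  ext j'
  by_cases h : j' = j
  · subst h; simp [zerosOff, he]
  · simp [zerosOff, h]

theorem parityTerm_add_parityTerm_update (t : ℕ) {a : Fin n → Fin s} (ha : (a i : ℕ) = 0)
    (hv : (v : ℕ) ≠ 0) (j : Fin n) :
    parityTerm lam mu t x a j + parityTerm lam mu t y (update a i v) j =
      lam j ^ t * repairSum i v x y j a
        + (if j = i then ∑ e ∈ nonzeroSymbols s, mu e ^ t * x i (update a i e) else 0)
        + if j ∈ zerosOff i a then
            ∑ e ∈ nonzeroSymbols s, mu e ^ t * repairSum i v x y j (update a j e) else 0 := by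
  by_cases hj : j = i
  · subst hj
    simp only [parityTerm, ha, ↓reduceIte, update_self, hv, add_zero, repairSum, zerosOff,
      mem_filter, ne_eq, not_true_eq_false, false_and, and_false]
    ring
  · have hcomm (e : Fin s) : update (update a i v) j e = update (update a j e) i v :=
      update_comm (Ne.symm hj) v e a
    by_cases hz : (a j : ℕ) = 0
    · simp only [parityTerm, hz, ↓reduceIte, hj, update_of_ne, hcomm, repairSum, mul_add,
        add_zero, zerosOff, mem_filter, mem_univ, ne_eq, not_false_eq_true, and_self,
        sum_add_distrib]
      ring
    · simp only [parityTerm, hz, ↓reduceIte, add_zero, hj, update_of_ne, repairSum, zerosOff,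
        mem_filter, mem_univ, ne_eq, not_false_eq_true, and_false]
      ring

theorem ParityChecks.repairSum_check (hx : ParityChecks lam mu r x)
    (hy : ParityChecks lam mu r y) (hv : (v : ℕ) ≠ 0) {a : Fin n → Fin s} (ha : (a i : ℕ) = 0)
    {t : ℕ} (ht : t < r) :
    ∑ j, lam j ^ t * repairSum i v x y j a
      + ∑ e ∈ nonzeroSymbols s, mu e ^ t * x i (update a i e)
      + ∑ j ∈ zerosOff i a, ∑ e ∈ nonzeroSymbols s,
          mu e ^ t * repairSum i v x y j (update a j e) = 0 := by
  have h := congrArg₂ (· + ·) (hx t ht a) (hy t ht (update a i v))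
  simp only [add_zero, ← sum_add_distrib, parityTerm_add_parityTerm_update t ha hv] at h
  rwa [sum_add_distrib, sum_add_distrib, sum_ite_eq', if_pos (mem_univ i), sum_ite_mem,
    univ_inter] at h

variable (hinj : Set.InjOn (Sum.elim lam mu)
    (univ.disjSum (nonzeroSymbols s) : Finset (Fin n ⊕ Fin s)))
  (hx : ParityChecks lam mu r x) (hy : ParityChecks lam mu r y) (hv : (v : ℕ) ≠ 0)
  {R : Finset (Fin n)} (hr : #Rᶜ + (s - 1) ≤ r)
include hinj hx hy hv hr

theorem repairSum_eq_zero_of_forall_update {a : Fin n → Fin s} (ha : (a i : ℕ) = 0)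
    (hR : ∀ u ∈ R, repairSum i v x y u a = 0)
    (hzeros : ∀ j ∈ zerosOff i a, ∀ e ∈ nonzeroSymbols s, repairSum i v x y j (update a j e) = 0)
    (j : Fin n) : repairSum i v x y j a = 0 := by
  by_cases hj : j ∈ R
  · exact hR j hj
  set M := Rᶜ.disjSum (nonzeroSymbols s)
  have hM : #M ≤ r := by rwa [card_disjSum, card_nonzeroSymbols]
  have hchecks (t : ℕ) (ht : t < #M) : ∑ m ∈ M, Sum.elim lam mu m ^ t *
      Sum.elim (fun j => repairSum i v x y j a) (fun e => x i (update a i e)) m = 0 := by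
    have h := hx.repairSum_check hy hv ha (ht.trans_le hM)
    rw [sum_eq_zero fun j hj => sum_eq_zero fun e he => by rw [hzeros j hj e he, mul_zero],
      add_zero, ← sum_add_sum_compl R, sum_eq_zero fun u hu => by rw [hR u hu, mul_zero],
      zero_add] at h
    simpa only [M, sum_disjSum, Sum.elim_inl, Sum.elim_inr] using h
  have hinjM : Set.InjOn (Sum.elim lam mu) M :=
    hinj.mono (disjSum_mono (subset_univ _) subset_rfl)
  simpa using eq_zero_of_forall_sum_pow_mul_eq_zero hinjM hchecks (.inl j) (by simpa [M] using hj)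

theorem repairSum_eq_zero_of_helpers
    (hR : ∀ u ∈ R, ∀ a : Fin n → Fin s, (a i : ℕ) = 0 → repairSum i v x y u a = 0)
    (j : Fin n) (a : Fin n → Fin s) (ha : (a i : ℕ) = 0) : repairSum i v x y j a = 0 := by
  induction hm : #(zerosOff i a) using Nat.strong_induction_on generalizing a j with
  | _ m ih =>
    refine repairSum_eq_zero_of_forall_update hinj hx hy hv hr ha (fun u hu => hR u hu a ha)
      (fun j' hj' e he => ?_) j
    have hj'i : j' ≠ i := (mem_filter.mp hj').2.1
    have he0 : (e : ℕ) ≠ 0 := (mem_filter.mp he).2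
    refine ih _ ?_ _ _ (by rwa [update_of_ne hj'i.symm]) rfl
    rw [zerosOff_update hj' he0, card_erase_of_mem hj', ← hm]
    exact Nat.sub_lt (card_pos.mpr ⟨j', hj'⟩) one_pos

end ParityChecks

theorem repair_sums_recovered_at_all_nodes_general
    {F : Type*} [Field F]
    (n k d h r s : ℕ)
    (hnk : n = k + r) (hkd : k < d) (hdn : d + h ≤ n)
    (hs : s = d - k + 1)
    (lam : Fin n → F) (mu : Fin s → F)
    (hlam : Function.Injective lam)
    (hmu : ∀ e e' : Fin s, (e : ℕ) ≠ 0 → (e' : ℕ) ≠ 0 → mu e = mu e' → e = e')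
    (hlammu : ∀ (i : Fin n) (e : Fin s), (e : ℕ) ≠ 0 → lam i ≠ mu e)
    (c c' : Fin n → ℕ → (Fin n → Fin s) → F)
    (hc : codeC n r s (d - k + h) lam mu c) (hc' : codeC n r s (d - k + h) lam mu c')
    (i : Fin n) (v : Fin s) (hv : (v : ℕ) ≠ 0)
    (b1 b2 : ℕ) (hb1 : 1 ≤ b1) (hb1' : b1 ≤ d - k + h)
    (hb2 : 1 ≤ b2) (hb2' : b2 ≤ d - k + h)
    (R : Finset (Fin n)) (hR : R.card = d)
    (hdownload : ∀ u ∈ R, ∀ a : Fin n → Fin s, (a i : ℕ) = 0 →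
      c u b1 a + c u b2 (Function.update a i v)
        = c' u b1 a + c' u b2 (Function.update a i v)) :
    ∀ j : Fin n, ∀ a : Fin n → Fin s, (a i : ℕ) = 0 →
      c j b1 a + c j b2 (Function.update a i v)
        = c' j b1 a + c' j b2 (Function.update a i v) := by
  have hr : #Rᶜ + (s - 1) ≤ r := by
    rw [card_compl, Fintype.card_fin, hR]
    omega
  have hdiff := repairSum_eq_zero_of_helpers (injOn_sumElim_nonzeroSymbols hlam hmu hlammu)
    ((hc.parityChecks hb1 hb1').sub (hc'.parityChecks hb1 hb1'))
    ((hc.parityChecks hb2 hb2').sub (hc'.parityChecks hb2 hb2')) hv hr fun u hu a ha => by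
      simp only [repairSum, Pi.sub_apply]
      linear_combination hdownload u hu a ha
  intro j a ha
  have h := hdiff j a ha
  simp only [repairSum, Pi.sub_apply] at h
  linear_combination h

/-- Lemma 5, first part: if two codewords of `C` agree on the downloaded sums
`c_{u,b₁,a} + c_{u,b₂,a(i,v)}` for all helper nodes `u ∈ R` (`|R| = d`,
`i ∉ R`) and all `a ∈ V_i`, then they agree on these sums for every node
`j ∈ [0,n)`. -/
theorem repair_sums_recovered_at_all_nodes
    {F : Type*} [Field F] [Fintype F]
    (n k d h r s N : ℕ) (hk0 : 0 < k) (hr0 : 0 < r) (hh : 1 ≤ h)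
    (hnk : n = k + r) (hkd : k < d) (hdn : d + h ≤ n)
    (hs : s = d - k + 1) (hN : N = (d - k + h) * s ^ n)
    (lam : Fin n → F) (mu : Fin s → F)
    (hlam : Function.Injective lam)
    (hmu : ∀ e e' : Fin s, (e : ℕ) ≠ 0 → (e' : ℕ) ≠ 0 → mu e = mu e' → e = e')
    (hlammu : ∀ (i : Fin n) (e : Fin s), (e : ℕ) ≠ 0 → lam i ≠ mu e)
    (c c' : Fin n → ℕ → (Fin n → Fin s) → F)
    (hc : codeC n r s (d - k + h) lam mu c) (hc' : codeC n r s (d - k + h) lam mu c')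
    (i : Fin n) (v : Fin s) (hv : (v : ℕ) ≠ 0)
    (b1 b2 : ℕ) (hb1 : 1 ≤ b1) (hb1' : b1 ≤ d - k + h)
    (hb2 : 1 ≤ b2) (hb2' : b2 ≤ d - k + h) (hb12 : b1 ≠ b2)
    (R : Finset (Fin n)) (hiR : i ∉ R) (hR : R.card = d)
    (hdownload : ∀ u ∈ R, ∀ a : Fin n → Fin s, (a i : ℕ) = 0 →
      c u b1 a + c u b2 (Function.update a i v)
        = c' u b1 a + c' u b2 (Function.update a i v)) :
    ∀ j : Fin n, ∀ a : Fin n → Fin s, (a i : ℕ) = 0 →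
      c j b1 a + c j b2 (Function.update a i v)
        = c' j b1 a + c' j b2 (Function.update a i v) :=
  repair_sums_recovered_at_all_nodes_general n k d h r s hnk hkd hdn hs lam mu hlam hmu hlammu c c'
    hc hc' i v hv b1 b2 hb1 hb1' hb2 hb2' R hR hdownload
end

section
/- (Lemma 5, second part) Fix i ∈ {0, …, n−1}, b_1 ≠ b_2 ∈ {1, …, d−k+h}, v ∈ {1, …, s−1}, and a helper set R ⊆ {0, …, n−1} \ {i} with |R| = d. If two codewords c, c' ∈ C satisfy c_{u,b_1,a} + c_{u,b_2,a(i,v)} = c'_{u,b_1,a} + c'_{u,b_2,a(i,v)} for all u ∈ R and all a ∈ V_i, then c_{i,b_1,a(i,e)} = c'_{i,b_1,a(i,e)} for all a ∈ V_i and all e ∈ {1, …, s−1}; equivalently, node i's layer-b_1 symbols c_{i,b_1,a} are determined by the downloaded sums for every a with a_i ≠ 0. -/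
/-!
By linearity of `C` it suffices to show that a codeword `c` whose downloaded sums
`c_{u,b₁,a} + c_{u,b₂,a(i,v)}` vanish for `u ∈ R` has `c_{i,b₁,a(i,e)} = 0`. Adding the parity
checks of `(b₁, a)` and `(b₂, a(i,v))` gives, for each `t < r`, an equation in the downloaded sums
at `a` (weights `λ_u^t`), the downloaded sums at the `a(u,e)` with `u ≠ i`, `a_u = 0`, and the
unknowns `c_{i,b₁,a(i,e)}` (weights `μ_e^t`); node `i` drops out of the second check because
`a(i,v)_i = v ≠ 0`. By induction on the number of zero coordinates of `a`, the downloaded sums at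
the `a(u,e)` vanish, and what is left is a homogeneous Vandermonde system in the `(n - d) + (s - 1) = r`
distinct points `λ_u` (`u ∉ R`) and `μ_e`, whose only solution is zero.
-/

open Finset

theorem Finset.eq_zero_of_forall_sum_pow_mul_eq_zero_s6 {F ι : Type*} [Field F] {T : Finset ι}
    {p z : ι → F} {r : ℕ} (hp : Set.InjOn p T) (hT : #T ≤ r)
    (h : ∀ t < r, ∑ j ∈ T, p j ^ t * z j = 0) : ∀ j ∈ T, z j = 0 := by
  intro j hj
  let e := T.equivFin
  have hinj : Function.Injective fun x => p (e.symm x) := fun x y hxy =>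
    e.symm.injective (Subtype.ext (hp (e.symm x).2 (e.symm y).2 hxy))
  have hzero := Matrix.eq_zero_of_forall_pow_sum_mul_pow_eq_zero
    (v := fun x => z (e.symm x)) hinj fun t => by
      rw [← h t (t.2.trans_le hT), ← T.sum_coe_sort, ← e.symm.sum_comp]
      simp only [mul_comm]
  simpa using congrFun hzero (e ⟨j, hj⟩)

theorem Finset.injOn_sumElim_disjSum {α β γ : Type*} {A : Finset α} {B : Finset β}
    {f : α → γ} {g : β → γ} (hf : Set.InjOn f A) (hg : Set.InjOn g B)
    (hfg : ∀ a ∈ A, ∀ b ∈ B, f a ≠ g b) : Set.InjOn (Sum.elim f g) (A.disjSum B) := by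
  rintro (a | b) hx (a' | b') hy hxy <;>
    simp only [mem_coe, inl_mem_disjSum, inr_mem_disjSum, Sum.elim_inl, Sum.elim_inr,
      Sum.inl.injEq, Sum.inr.injEq, reduceCtorEq] at hx hy hxy ⊢
  · exact hf hx hy hxy
  · exact hfg a hx b' hy hxy
  · exact hfg a' hy b hx hxy.symm
  · exact hg hx hy hxy

theorem Fin.card_filter_val_ne_zero (s : ℕ) :
    #(univ.filter fun e : Fin s => (e : ℕ) ≠ 0) = s - 1 := by
  cases s with
  | zero => rfl
  | succ m => simp [filter_ne']

section

variable {F : Type*} [Field F] {n r s B : ℕ} {lam : Fin n → F} {mu : Fin s → F}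

theorem codeC.sub {c c' : Fin n → ℕ → (Fin n → Fin s) → F} (hc : codeC n r s B lam mu c)
    (hc' : codeC n r s B lam mu c') : codeC n r s B lam mu (c - c') := by
  intro t ht b hb hb' a
  have h := hc t ht b hb hb' a
  have h' := hc' t ht b hb hb' a
  simp only [← sum_filter] at h h' ⊢
  simp only [Pi.sub_apply, mul_sub, sum_sub_distrib]
  linear_combination h - h'

def downloadSum (f : Fin n → ℕ → (Fin n → Fin s) → F) (i : Fin n) (v : Fin s) (b₁ b₂ : ℕ)
    (u : Fin n) (a : Fin n → Fin s) : F :=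
  f u b₁ a + f u b₂ (Function.update a i v)

/-- The sum of the parity checks of `(b₁, a)` and `(b₂, a(i,v))`. -/
theorem codeC.parity_check_downloadSum {f : Fin n → ℕ → (Fin n → Fin s) → F}
    (hf : codeC n r s B lam mu f) {i : Fin n} {v : Fin s} (hv : (v : ℕ) ≠ 0) {b₁ b₂ : ℕ}
    (hb₁ : 1 ≤ b₁) (hb₁' : b₁ ≤ B) (hb₂ : 1 ≤ b₂) (hb₂' : b₂ ≤ B) {a : Fin n → Fin s}
    (ha : (a i : ℕ) = 0) {t : ℕ} (ht : t < r) :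
    ∑ u, lam u ^ t * downloadSum f i v b₁ b₂ u a
      + ∑ u ∈ ({i}ᶜ : Finset (Fin n)), (if (a u : ℕ) = 0 then
          ∑ e ∈ univ.filter (fun e : Fin s => (e : ℕ) ≠ 0),
            mu e ^ t * downloadSum f i v b₁ b₂ u (Function.update a u e)
        else 0)
      + ∑ e ∈ univ.filter (fun e : Fin s => (e : ℕ) ≠ 0),
          mu e ^ t * f i b₁ (Function.update a i e) = 0 := by
  have h₁ := hf t ht b₁ hb₁ hb₁' a
  have h₂ := hf t ht b₂ hb₂ hb₂' (Function.update a i v)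
  rw [Fintype.sum_eq_add_sum_compl i (fun u => ite _ _ _), if_pos ha] at h₁
  rw [Fintype.sum_eq_add_sum_compl i (fun u => ite _ _ _), Function.update_self, if_neg hv,
    zero_add] at h₂
  have hswap : ∀ u ∈ ({i}ᶜ : Finset (Fin n)),
      (if ((Function.update a i v u : Fin s) : ℕ) = 0 then
          ∑ e ∈ univ.filter (fun e : Fin s => (e : ℕ) ≠ 0),
            mu e ^ t * f u b₂ (Function.update (Function.update a i v) u e)
        else 0)
        = if (a u : ℕ) = 0 then
            ∑ e ∈ univ.filter (fun e : Fin s => (e : ℕ) ≠ 0),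
              mu e ^ t * f u b₂ (Function.update (Function.update a u e) i v)
          else 0 := by
    intro u hu
    have hui : u ≠ i := by simpa using hu
    simp only [Function.update_of_ne hui, Function.update_comm (Ne.symm hui)]
  rw [sum_congr rfl hswap] at h₂
  simp only [← sum_filter] at h₁ h₂ ⊢
  simp only [downloadSum, mul_add, sum_add_distrib]
  linear_combination h₁ + h₂

theorem codeC.eq_zero_of_downloadSum_update_eq_zero {f : Fin n → ℕ → (Fin n → Fin s) → F}
    (hf : codeC n r s B lam mu f)
    (hpts : Set.InjOn (Sum.elim lam mu)
      (univ.disjSum (univ.filter fun e : Fin s => (e : ℕ) ≠ 0) : Finset (Fin n ⊕ Fin s)))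
    {i : Fin n} {v : Fin s} (hv : (v : ℕ) ≠ 0) {b₁ b₂ : ℕ}
    (hb₁ : 1 ≤ b₁) (hb₁' : b₁ ≤ B) (hb₂ : 1 ≤ b₂) (hb₂' : b₂ ≤ B) {R : Finset (Fin n)}
    (hcard : n - #R + (s - 1) ≤ r) {a : Fin n → Fin s} (ha : (a i : ℕ) = 0)
    (hR : ∀ u ∈ R, downloadSum f i v b₁ b₂ u a = 0)
    (hupdate : ∀ u ≠ i, (a u : ℕ) = 0 → ∀ e : Fin s, (e : ℕ) ≠ 0 →
      downloadSum f i v b₁ b₂ u (Function.update a u e) = 0) :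
    (∀ u ∉ R, downloadSum f i v b₁ b₂ u a = 0) ∧
      ∀ e : Fin s, (e : ℕ) ≠ 0 → f i b₁ (Function.update a i e) = 0 := by
  set E := univ.filter fun e : Fin s => (e : ℕ) ≠ 0
  have hinj : Set.InjOn (Sum.elim lam mu) (Rᶜ.disjSum E) :=
    hpts.mono (coe_subset.2 (disjSum_mono_left E (subset_univ Rᶜ)))
  have hT : #(Rᶜ.disjSum E) ≤ r := by
    rwa [card_disjSum, card_compl, Fintype.card_fin, Fin.card_filter_val_ne_zero]
  have hchecks : ∀ t < r, ∑ x ∈ Rᶜ.disjSum E, Sum.elim lam mu x ^ t *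
      Sum.elim (downloadSum f i v b₁ b₂ · a) (fun e => f i b₁ (Function.update a i e)) x = 0 := by
    intro t ht
    have h := hf.parity_check_downloadSum hv hb₁ hb₁' hb₂ hb₂' ha ht
    rw [← sum_subset (subset_univ Rᶜ) fun u _ hu => ?inR,
      sum_eq_zero (s := ({i}ᶜ : Finset (Fin n))) fun u hu => ?updated, add_zero] at h
    · simpa [sum_disjSum] using h
    case inR => rw [hR u (by simpa using hu), mul_zero]
    case updated =>
      have hui : u ≠ i := by simpa using hu
      split_ifs with hau
      · exact sum_eq_zero fun e he => by rw [hupdate u hui hau e (mem_filter.1 he).2, mul_zero]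
      · rfl
  have hzero := eq_zero_of_forall_sum_pow_mul_eq_zero_s6 hinj hT hchecks
  exact ⟨fun u hu => hzero (.inl u) (by simpa using hu),
    fun e he => hzero (.inr e) (by simpa [E] using he)⟩

theorem codeC.downloadSum_eq_zero {f : Fin n → ℕ → (Fin n → Fin s) → F}
    (hf : codeC n r s B lam mu f)
    (hpts : Set.InjOn (Sum.elim lam mu)
      (univ.disjSum (univ.filter fun e : Fin s => (e : ℕ) ≠ 0) : Finset (Fin n ⊕ Fin s)))
    {i : Fin n} {v : Fin s} (hv : (v : ℕ) ≠ 0) {b₁ b₂ : ℕ}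
    (hb₁ : 1 ≤ b₁) (hb₁' : b₁ ≤ B) (hb₂ : 1 ≤ b₂) (hb₂' : b₂ ≤ B) {R : Finset (Fin n)}
    (hcard : n - #R + (s - 1) ≤ r)
    (hR : ∀ u ∈ R, ∀ a : Fin n → Fin s, (a i : ℕ) = 0 → downloadSum f i v b₁ b₂ u a = 0)
    (a : Fin n → Fin s) (ha : (a i : ℕ) = 0) (u : Fin n) :
    downloadSum f i v b₁ b₂ u a = 0 := by
  by_cases hu : u ∈ R
  · exact hR u hu a ha
  refine (hf.eq_zero_of_downloadSum_update_eq_zero hpts hv hb₁ hb₁' hb₂ hb₂' hcard ha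
    (hR · · a ha) fun w hwi haw e he => ?_).1 u hu
  have hfewer : #{x | ((Function.update a w e x : Fin s) : ℕ) = 0} < #{x | (a x : ℕ) = 0} := by
    refine card_lt_card ⟨fun x hx => ?_, fun hsub => he ?_⟩
    · rcases eq_or_ne x w with rfl | hxw
      · simp [he] at hx
      · simpa [hxw] using hx
    · simpa using mem_filter.1 (hsub (mem_filter.2 ⟨mem_univ w, haw⟩))
  exact hf.downloadSum_eq_zero hpts hv hb₁ hb₁' hb₂ hb₂' hcard hR _
    (by rwa [Function.update_of_ne hwi.symm]) w
termination_by #{x | (a x : ℕ) = 0}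

theorem codeC.eq_zero_of_downloadSum_eq_zero {f : Fin n → ℕ → (Fin n → Fin s) → F}
    (hf : codeC n r s B lam mu f)
    (hpts : Set.InjOn (Sum.elim lam mu)
      (univ.disjSum (univ.filter fun e : Fin s => (e : ℕ) ≠ 0) : Finset (Fin n ⊕ Fin s)))
    {i : Fin n} {v : Fin s} (hv : (v : ℕ) ≠ 0) {b₁ b₂ : ℕ}
    (hb₁ : 1 ≤ b₁) (hb₁' : b₁ ≤ B) (hb₂ : 1 ≤ b₂) (hb₂' : b₂ ≤ B) {R : Finset (Fin n)}
    (hcard : n - #R + (s - 1) ≤ r)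
    (hR : ∀ u ∈ R, ∀ a : Fin n → Fin s, (a i : ℕ) = 0 → downloadSum f i v b₁ b₂ u a = 0)
    {a : Fin n → Fin s} (ha : (a i : ℕ) = 0) {e : Fin s} (he : (e : ℕ) ≠ 0) :
    f i b₁ (Function.update a i e) = 0 :=
  (hf.eq_zero_of_downloadSum_update_eq_zero hpts hv hb₁ hb₁' hb₂ hb₂' hcard ha (hR · · a ha)
    fun u hui _ _ _ => hf.downloadSum_eq_zero hpts hv hb₁ hb₁' hb₂ hb₂' hcard hR _
      (by rwa [Function.update_of_ne hui.symm]) u).2 e he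
end

theorem node_i_layer_b1_recovered_general
    {F : Type*} [Field F]
    (n k d h r s : ℕ)
    (hnk : n = k + r) (hkd : k < d) (hdn : d + h ≤ n)
    (hs : s = d - k + 1)
    (lam : Fin n → F) (mu : Fin s → F)
    (hlam : Function.Injective lam)
    (hmu : ∀ e e' : Fin s, (e : ℕ) ≠ 0 → (e' : ℕ) ≠ 0 → mu e = mu e' → e = e')
    (hlammu : ∀ (i : Fin n) (e : Fin s), (e : ℕ) ≠ 0 → lam i ≠ mu e)
    (c c' : Fin n → ℕ → (Fin n → Fin s) → F)
    (hc : codeC n r s (d - k + h) lam mu c) (hc' : codeC n r s (d - k + h) lam mu c')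
    (i : Fin n) (v : Fin s) (hv : (v : ℕ) ≠ 0)
    (b1 b2 : ℕ) (hb1 : 1 ≤ b1) (hb1' : b1 ≤ d - k + h)
    (hb2 : 1 ≤ b2) (hb2' : b2 ≤ d - k + h)
    (R : Finset (Fin n)) (hR : R.card = d)
    (hdownload : ∀ u ∈ R, ∀ a : Fin n → Fin s, (a i : ℕ) = 0 →
      c u b1 a + c u b2 (Function.update a i v)
        = c' u b1 a + c' u b2 (Function.update a i v)) :
    ∀ a : Fin n → Fin s, (a i : ℕ) = 0 → ∀ e : Fin s, (e : ℕ) ≠ 0 →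
      c i b1 (Function.update a i e) = c' i b1 (Function.update a i e) := by
  intro a ha e he
  have hpts : Set.InjOn (Sum.elim lam mu)
      (univ.disjSum (univ.filter fun e : Fin s => (e : ℕ) ≠ 0) : Finset (Fin n ⊕ Fin s)) :=
    injOn_sumElim_disjSum hlam.injOn
      (fun e he e' he' => hmu e e' (mem_filter.1 he).2 (mem_filter.1 he').2)
      fun u _ e he => hlammu u e (mem_filter.1 he).2
  have hcard : n - #R + (s - 1) ≤ r := by omega
  have hdiff : ∀ u ∈ R, ∀ a : Fin n → Fin s, (a i : ℕ) = 0 →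
      downloadSum (c - c') i v b1 b2 u a = 0 := fun u hu a ha => by
    simp only [downloadSum, Pi.sub_apply]
    linear_combination hdownload u hu a ha
  exact sub_eq_zero.1 <| (hc.sub hc').eq_zero_of_downloadSum_eq_zero hpts hv hb1 hb1' hb2 hb2'
    hcard hdiff ha he

/-- Lemma 5, second part: if two codewords of `C` agree on the downloaded sums
`c_{u,b₁,a} + c_{u,b₂,a(i,v)}` for all helper nodes `u ∈ R` (`|R| = d`,
`i ∉ R`) and all `a ∈ V_i`, then they agree on node `i`'s layer-`b₁` symbols
`c_{i,b₁,a(i,e)}` for all `a ∈ V_i` and all `e ∈ {1,…,s-1}`. -/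
theorem node_i_layer_b1_recovered
    {F : Type*} [Field F] [Fintype F]
    (n k d h r s N : ℕ) (hk0 : 0 < k) (hr0 : 0 < r) (hh : 1 ≤ h)
    (hnk : n = k + r) (hkd : k < d) (hdn : d + h ≤ n)
    (hs : s = d - k + 1) (hN : N = (d - k + h) * s ^ n)
    (lam : Fin n → F) (mu : Fin s → F)
    (hlam : Function.Injective lam)
    (hmu : ∀ e e' : Fin s, (e : ℕ) ≠ 0 → (e' : ℕ) ≠ 0 → mu e = mu e' → e = e')
    (hlammu : ∀ (i : Fin n) (e : Fin s), (e : ℕ) ≠ 0 → lam i ≠ mu e)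
    (c c' : Fin n → ℕ → (Fin n → Fin s) → F)
    (hc : codeC n r s (d - k + h) lam mu c) (hc' : codeC n r s (d - k + h) lam mu c')
    (i : Fin n) (v : Fin s) (hv : (v : ℕ) ≠ 0)
    (b1 b2 : ℕ) (hb1 : 1 ≤ b1) (hb1' : b1 ≤ d - k + h)
    (hb2 : 1 ≤ b2) (hb2' : b2 ≤ d - k + h) (hb12 : b1 ≠ b2)
    (R : Finset (Fin n)) (hiR : i ∉ R) (hR : R.card = d)
    (hdownload : ∀ u ∈ R, ∀ a : Fin n → Fin s, (a i : ℕ) = 0 →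
      c u b1 a + c u b2 (Function.update a i v)
        = c' u b1 a + c' u b2 (Function.update a i v)) :
    ∀ a : Fin n → Fin s, (a i : ℕ) = 0 → ∀ e : Fin s, (e : ℕ) ≠ 0 →
      c i b1 (Function.update a i e) = c' i b1 (Function.update a i e) :=
  node_i_layer_b1_recovered_general n k d h r s hnk hkd hdn hs lam mu hlam hmu hlammu c c' hc hc' i
    v hv b1 b2 hb1 hb1' hb2 hb2' R hR hdownload
end

section
/- (Download phase) Assume h ≥ 2. Let i_1, …, i_h ∈ {0, …, n−1} be distinct failed-node indices and R ⊆ {0, …, n−1} \ {i_1, …, i_h} a helper set with |R| = d. Fix j ∈ {1, …, h}. If two codewords c, c' ∈ C satisfy c_{u,d−k+j,a} = c'_{u,d−k+j,a} for all u ∈ R, a ∈ V_{i_j}, and c_{u,b,a} + c_{u,d−k+j,a(i_j,b)} = c'_{u,b,a} + c'_{u,d−k+j,a(i_j,b)} for all u ∈ R, b ∈ {1, …, d−k}, a ∈ V_{i_j}, then: (1) c_{i_j,b,a} = c'_{i_j,b,a} for all b ∈ {1, …, d−k} ∪ {d−k+j} and all a ∈ {0, …, s−1}^n; (2) c_{i_l,d−k+j,a}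 = c'_{i_l,d−k+j,a} for all l ≠ j and all a ∈ V_{i_j}; and (3) c_{i_l,b,a} + c_{i_l,d−k+j,a(i_j,b)} = c'_{i_l,b,a} + c'_{i_l,d−k+j,a(i_j,b)} for all l ≠ j, b ∈ {1, …, d−k}, a ∈ V_{i_j}. -/
open Finset

open Polynomial in

lemma vand_zero {F : Type*} [Field F] {ι : Type*} [Fintype ι] [DecidableEq ι]
    (pts : ι → F) (hinj : Function.Injective pts) (v : ι → F)
    (h : ∀ t < Fintype.card ι, ∑ i, pts i ^ t * v i = 0) (i0 : ι) : v i0 = 0 := by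
  classical
  set m := Fintype.card ι with hm
  set Q : Polynomial F := ∏ i ∈ univ.erase i0, (X - C (pts i)) with hQ
  have hdeg : Q.natDegree < m := by
    have h1 : Q.natDegree = (univ.erase i0).card := by
      rw [hQ, natDegree_prod]
      · simp [natDegree_X_sub_C]
      · intro i _; exact X_sub_C_ne_zero _
    rw [h1, card_erase_of_mem (mem_univ _)]
    have h0 : 0 < m := Fintype.card_pos_iff.mpr ⟨i0⟩
    rw [Finset.card_univ]
    omega
  have key : ∑ i, Q.eval (pts i) * v i = 0 := by
    have h2 : ∀ i : ι, Q.eval (pts i) * v i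
        = ∑ t ∈ Finset.range m, Q.coeff t * (pts i ^ t * v i) := by
      intro i
      rw [eval_eq_sum_range' hdeg, Finset.sum_mul]
      simp [mul_assoc]
    simp_rw [h2]
    rw [Finset.sum_comm]
    apply Finset.sum_eq_zero
    intro t ht
    rw [← Finset.mul_sum, h t (Finset.mem_range.mp ht), mul_zero]
  have hzero : ∀ i ≠ i0, Q.eval (pts i) * v i = 0 := by
    intro i hi
    rw [hQ, eval_prod]
    rw [Finset.prod_eq_zero (Finset.mem_erase.mpr ⟨hi, mem_univ i⟩)]
    · ring
    · simp
  rw [Finset.sum_eq_single i0 (fun i _ hi => hzero i hi) (by simp)] at key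
  have hne : Q.eval (pts i0) ≠ 0 := by
    rw [hQ, eval_prod]
    apply Finset.prod_ne_zero_iff.mpr
    intro i hi
    simp only [eval_sub, eval_X, eval_C, sub_ne_zero]
    exact fun hh => (Finset.mem_erase.mp hi).1 (hinj hh.symm)
  exact (mul_eq_zero.mp key).resolve_left hne

lemma key_lemma {F : Type*} [Field F] {n r s : ℕ}
    (lam : Fin n → F) (mu : Fin s → F)
    (hlam : Function.Injective lam)
    (hmu : ∀ e e' : Fin s, (e : ℕ) ≠ 0 → (e' : ℕ) ≠ 0 → mu e = mu e' → e = e')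
    (hlammu : ∀ (i : Fin n) (e : Fin s), (e : ℕ) ≠ 0 → lam i ≠ mu e)
    (R : Finset (Fin n)) (ij : Fin n)
    (hcard : (n - R.card) + (s - 1) = r) (hs0 : 0 < s)
    (z : Fin n → (Fin n → Fin s) → F)
    (y : Fin s → (Fin n → Fin s) → F)
    (heq : ∀ t < r, ∀ a : Fin n → Fin s, (a ij : ℕ) = 0 →
      ∑ i, lam i ^ t * z i a
      + ∑ e ∈ univ.filter (fun e : Fin s => (e : ℕ) ≠ 0), mu e ^ t * y e a
      + ∑ i ∈ univ.filter (fun i : Fin n => i ≠ ij ∧ (a i : ℕ) = 0),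
          ∑ e ∈ univ.filter (fun e : Fin s => (e : ℕ) ≠ 0),
            mu e ^ t * z i (Function.update a i e) = 0)
    (hz : ∀ u ∈ R, ∀ a : Fin n → Fin s, (a ij : ℕ) = 0 → z u a = 0) :
    ∀ a : Fin n → Fin s, (a ij : ℕ) = 0 →
      (∀ i, z i a = 0) ∧ (∀ e : Fin s, (e : ℕ) ≠ 0 → y e a = 0) := by
  classical
  -- cardinalities
  have hEcard : (univ.filter (fun e : Fin s => (e : ℕ) ≠ 0)).card = s - 1 := by
    have : (univ.filter (fun e : Fin s => (e : ℕ) ≠ 0)) = univ.erase ⟨0, hs0⟩ := by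
      ext e
      simp [Fin.ext_iff]
    rw [this, card_erase_of_mem (mem_univ _)]
    simp
  have hRccard : Rᶜ.card = n - R.card := by
    rw [Finset.card_compl]
    simp
  -- the step lemma
  have step : ∀ a : Fin n → Fin s, (a ij : ℕ) = 0 →
      (∀ i ∈ univ.filter (fun i : Fin n => i ≠ ij ∧ (a i : ℕ) = 0),
        ∀ e : Fin s, (e : ℕ) ≠ 0 → z i (Function.update a i e) = 0) →
      (∀ i, z i a = 0) ∧ (∀ e : Fin s, (e : ℕ) ≠ 0 → y e a = 0) := by
    intro a ha hprev
    set E := univ.filter (fun e : Fin s => (e : ℕ) ≠ 0) with hE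
    -- the reduced equations
    have heq2 : ∀ t < r,
        (∑ i ∈ Rᶜ, lam i ^ t * z i a) + ∑ e ∈ E, mu e ^ t * y e a = 0 := by
      intro t ht
      have h0 := heq t ht a ha
      have h1 : ∑ i ∈ univ.filter (fun i : Fin n => i ≠ ij ∧ (a i : ℕ) = 0),
          ∑ e ∈ E, mu e ^ t * z i (Function.update a i e) = 0 := by
        apply Finset.sum_eq_zero
        intro i hi
        apply Finset.sum_eq_zero
        intro e he
        rw [hprev i hi e (by simpa [hE] using (Finset.mem_filter.mp he).2), mul_zero]
      rw [h1, add_zero] at h0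
      have h2 : ∑ i, lam i ^ t * z i a = ∑ i ∈ Rᶜ, lam i ^ t * z i a := by
        rw [← Finset.sum_add_sum_compl R]
        rw [Finset.sum_eq_zero, zero_add]
        intro u hu
        rw [hz u hu a ha, mul_zero]
      rwa [h2] at h0
    -- set up the index type
    have hcardι : Fintype.card ({x // x ∈ Rᶜ} ⊕ {x // x ∈ E}) = r := by
      rw [Fintype.card_sum, Fintype.card_coe, Fintype.card_coe, hRccard, hEcard, hcard]
    set pts : ({x // x ∈ Rᶜ} ⊕ {x // x ∈ E}) → F := Sum.elim (fun i => lam i.1) (fun e => mu e.1) with hpts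
    have hptsinj : Function.Injective pts := by
      rintro (⟨i, hi⟩ | ⟨e, he⟩) (⟨i', hi'⟩ | ⟨e', he'⟩) hp <;>
        simp only [hpts, Sum.elim_inl, Sum.elim_inr] at hp
      · exact congrArg _ (Subtype.ext (hlam hp))
      · exact absurd hp (hlammu i e' (by simpa [hE] using he'))
      · exact absurd hp.symm (hlammu i' e (by simpa [hE] using he))
      · exact congrArg _ (Subtype.ext (hmu e e' (by simpa [hE] using he)
          (by simpa [hE] using he') hp))
    set v : ({x // x ∈ Rᶜ} ⊕ {x // x ∈ E}) → F := Sum.elim (fun i => z i.1 a) (fun e => y e.1 a) with hv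
    have hsys : ∀ t < r, ∑ x, pts x ^ t * v x = 0 := by
      intro t ht
      rw [Fintype.sum_sum_type]
      have e1 : ∑ x : {x // x ∈ Rᶜ}, pts (Sum.inl x) ^ t * v (Sum.inl x)
          = ∑ i ∈ Rᶜ, lam i ^ t * z i a := by
        rw [← Finset.sum_coe_sort Rᶜ (fun i => lam i ^ t * z i a)]
        rfl
      have e2 : ∑ x : {x // x ∈ E}, pts (Sum.inr x) ^ t * v (Sum.inr x)
          = ∑ e ∈ E, mu e ^ t * y e a := by
        rw [← Finset.sum_coe_sort E (fun e => mu e ^ t * y e a)]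
        rfl
      rw [e1, e2]
      exact heq2 t ht
    have hvz := fun i0 => vand_zero pts hptsinj v (fun t ht => hsys t (hcardι ▸ ht)) i0
    constructor
    · intro i
      by_cases hiR : i ∈ R
      · exact hz i hiR a ha
      · exact hvz (Sum.inl ⟨i, Finset.mem_compl.mpr hiR⟩)
    · intro e he
      exact hvz (Sum.inr ⟨e, by simp [hE, he]⟩)
  -- induction on number of zero coordinates
  have main : ∀ m : ℕ, ∀ a : Fin n → Fin s,
      (univ.filter (fun i : Fin n => i ≠ ij ∧ (a i : ℕ) = 0)).card ≤ m →
      (a ij : ℕ) = 0 →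
      (∀ i, z i a = 0) ∧ (∀ e : Fin s, (e : ℕ) ≠ 0 → y e a = 0) := by
    intro m
    induction m with
    | zero =>
      intro a hm ha
      apply step a ha
      intro i hi
      have : (univ.filter (fun i : Fin n => i ≠ ij ∧ (a i : ℕ) = 0)) = ∅ :=
        Finset.card_eq_zero.mp (Nat.le_zero.mp hm)
      rw [this] at hi
      exact absurd hi (Finset.notMem_empty i)
    | succ m IH =>
      intro a hm ha
      apply step a ha
      intro i hi e he
      obtain ⟨hij, hai⟩ := (Finset.mem_filter.mp hi).2
      have hfil : (univ.filter (fun i' : Fin n =>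
          i' ≠ ij ∧ ((Function.update a i e) i' : ℕ) = 0))
          = (univ.filter (fun i' : Fin n => i' ≠ ij ∧ (a i' : ℕ) = 0)).erase i := by
        ext i'
        by_cases h' : i' = i
        · subst h'
          simp [Function.update_self, he]
        · simp [Function.update_of_ne h', h']
      have hcard' : (univ.filter (fun i' : Fin n =>
          i' ≠ ij ∧ ((Function.update a i e) i' : ℕ) = 0)).card ≤ m := by
        rw [hfil, Finset.card_erase_of_mem hi]
        omega
      have ha' : ((Function.update a i e) ij : ℕ) = 0 := by
        rw [Function.update_of_ne (Ne.symm hij)]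
        exact ha
      exact (IH (Function.update a i e) hcard' ha').1 i
  intro a ha
  exact main _ a le_rfl ha

/-- Download phase: the failed nodes are `idx 0, …, idx (h-1)` (pairwise
distinct, `idx j` playing the role of `i_{j+1}`), and `R` is a helper set of
size `d` disjoint from them.  Fix `j`.  If two codewords of `C` agree on all
data downloaded by node `idx j`, namely `D_{1,j} = {c_{u,d-k+j+1,a} : u ∈ R, a ∈ V_{idx j}}`
and `D_{2,j} = {c_{u,b,a} + c_{u,d-k+j+1,a(idx j,b)} : u ∈ R, b ∈ [1,d-k], a ∈ V_{idx j}}`,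
then they agree on: (1) all of node `idx j`'s symbols in layers `{1,…,d-k} ∪ {d-k+j+1}`;
(2) the symbols `c_{i_l,d-k+j+1,a}`, `a ∈ V_{idx j}`, of every other failed node `idx l`; and
(3) the sums `c_{i_l,b,a} + c_{i_l,d-k+j+1,a(idx j,b)}` for every other failed
node `idx l`, every `b ∈ [1,d-k]` and every `a ∈ V_{idx j}`. -/
theorem download_phase
    {F : Type*} [Field F] [Fintype F]
    (n k d h r s N : ℕ) (hk0 : 0 < k) (hr0 : 0 < r) (hh : 2 ≤ h)
    (hnk : n = k + r) (hkd : k < d) (hdn : d + h ≤ n)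
    (hs : s = d - k + 1) (hN : N = (d - k + h) * s ^ n)
    (lam : Fin n → F) (mu : Fin s → F)
    (hlam : Function.Injective lam)
    (hmu : ∀ e e' : Fin s, (e : ℕ) ≠ 0 → (e' : ℕ) ≠ 0 → mu e = mu e' → e = e')
    (hlammu : ∀ (i : Fin n) (e : Fin s), (e : ℕ) ≠ 0 → lam i ≠ mu e)
    (c c' : Fin n → ℕ → (Fin n → Fin s) → F)
    (hc : codeC n r s (d - k + h) lam mu c) (hc' : codeC n r s (d - k + h) lam mu c')
    (idx : Fin h → Fin n) (hidx : Function.Injective idx)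
    (R : Finset (Fin n)) (hdisj : ∀ l : Fin h, idx l ∉ R) (hR : R.card = d)
    (j : Fin h)
    (hD1 : ∀ u ∈ R, ∀ a : Fin n → Fin s, (a (idx j) : ℕ) = 0 →
      c u (d - k + (j : ℕ) + 1) a = c' u (d - k + (j : ℕ) + 1) a)
    (hD2 : ∀ u ∈ R, ∀ (b : ℕ) (hb : 1 ≤ b) (hb' : b ≤ d - k),
      ∀ a : Fin n → Fin s, (a (idx j) : ℕ) = 0 →
        c u b a + c u (d - k + (j : ℕ) + 1) (Function.update a (idx j) ⟨b, by omega⟩)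
          = c' u b a
            + c' u (d - k + (j : ℕ) + 1) (Function.update a (idx j) ⟨b, by omega⟩)) :
    (∀ b : ℕ, ((1 ≤ b ∧ b ≤ d - k) ∨ b = d - k + (j : ℕ) + 1) →
      ∀ a : Fin n → Fin s, c (idx j) b a = c' (idx j) b a)
    ∧ (∀ l : Fin h, l ≠ j → ∀ a : Fin n → Fin s, (a (idx j) : ℕ) = 0 →
        c (idx l) (d - k + (j : ℕ) + 1) a = c' (idx l) (d - k + (j : ℕ) + 1) a)
    ∧ (∀ l : Fin h, l ≠ j → ∀ (b : ℕ) (hb : 1 ≤ b) (hb' : b ≤ d - k),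
        ∀ a : Fin n → Fin s, (a (idx j) : ℕ) = 0 →
          c (idx l) b a
              + c (idx l) (d - k + (j : ℕ) + 1)
                  (Function.update a (idx j) ⟨b, by omega⟩)
            = c' (idx l) b a
              + c' (idx l) (d - k + (j : ℕ) + 1)
                  (Function.update a (idx j) ⟨b, by omega⟩)) := by
  classical
  have hs0 : 0 < s := by omega
  have hsb : ∀ b : ℕ, b ≤ d - k → b < s := by omega
  set ij := idx j with hij
  set B := d - k + (j : ℕ) + 1 with hB
  have hjh : (j : ℕ) < h := j.isLt
  have hB1 : 1 ≤ B := by omega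
  have hB2 : B ≤ d - k + h := by omega
  set x : Fin n → ℕ → (Fin n → Fin s) → F := fun i b a => c i b a - c' i b a with hxdef
  -- x satisfies the (filtered form of the) parity checks
  have hx : ∀ t < r, ∀ b : ℕ, 1 ≤ b → b ≤ d - k + h → ∀ a : Fin n → Fin s,
      ∑ i, lam i ^ t * x i b a
      + ∑ i ∈ univ.filter (fun i : Fin n => (a i : ℕ) = 0),
          ∑ e ∈ univ.filter (fun e : Fin s => (e : ℕ) ≠ 0),
            mu e ^ t * x i b (Function.update a i e) = 0 := by
    intro t ht b hb hb' a
    have h1 := hc t ht b hb hb' a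
    have h2 := hc' t ht b hb hb' a
    rw [← Finset.sum_filter] at h1 h2
    simp only [hxdef, mul_sub, Finset.sum_sub_distrib]
    linear_combination h1 - h2
  -- splitting off the ij term of the delta sum
  have hsplit : ∀ (a : Fin n → Fin s), (a ij : ℕ) = 0 → ∀ (f : Fin n → F),
      ∑ i ∈ univ.filter (fun i : Fin n => (a i : ℕ) = 0), f i
        = f ij + ∑ i ∈ univ.filter (fun i : Fin n => i ≠ ij ∧ (a i : ℕ) = 0), f i := by
    intro a ha f
    have hins : univ.filter (fun i : Fin n => (a i : ℕ) = 0)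
        = insert ij (univ.filter (fun i : Fin n => i ≠ ij ∧ (a i : ℕ) = 0)) := by
      ext i
      by_cases hi : i = ij
      · subst hi; simp [ha]
      · simp [hi]
    rw [hins, Finset.sum_insert (by simp)]
  have hcard : (n - R.card) + (s - 1) = r := by rw [hR]; omega
  -- Application 1: layer B
  have heqB : ∀ t < r, ∀ a : Fin n → Fin s, (a ij : ℕ) = 0 →
      ∑ i, lam i ^ t * x i B a
      + ∑ e ∈ univ.filter (fun e : Fin s => (e : ℕ) ≠ 0),
          mu e ^ t * x ij B (Function.update a ij e)
      + ∑ i ∈ univ.filter (fun i : Fin n => i ≠ ij ∧ (a i : ℕ) = 0),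
          ∑ e ∈ univ.filter (fun e : Fin s => (e : ℕ) ≠ 0),
            mu e ^ t * x i B (Function.update a i e) = 0 := by
    intro t ht a ha
    have h0 := hx t ht B hB1 hB2 a
    rw [hsplit a ha] at h0
    linear_combination h0
  have A1 := key_lemma lam mu hlam hmu hlammu R ij hcard hs0
    (fun i a => x i B a)
    (fun e a => x ij B (Function.update a ij e))
    heqB
    (fun u hu a ha => sub_eq_zero_of_eq (hD1 u hu a ha))
  -- Application 2: layer b combined with layer B
  have A2 : ∀ (b : ℕ) (hb : 1 ≤ b) (hb' : b ≤ d - k),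
      ∀ a : Fin n → Fin s, (a ij : ℕ) = 0 →
        (∀ i, x i b a + x i B (Function.update a ij ⟨b, hsb b hb'⟩) = 0)
        ∧ (∀ e : Fin s, (e : ℕ) ≠ 0 → x ij b (Function.update a ij e) = 0) := by
    intro b hb hb'
    set bF : Fin s := ⟨b, hsb b hb'⟩ with hbF
    have hbF0 : (bF : ℕ) ≠ 0 := by simp [hbF]; omega
    have heq2 : ∀ t < r, ∀ a : Fin n → Fin s, (a ij : ℕ) = 0 →
        ∑ i, lam i ^ t * (x i b a + x i B (Function.update a ij bF))
        + ∑ e ∈ univ.filter (fun e : Fin s => (e : ℕ) ≠ 0),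
            mu e ^ t * x ij b (Function.update a ij e)
        + ∑ i ∈ univ.filter (fun i : Fin n => i ≠ ij ∧ (a i : ℕ) = 0),
            ∑ e ∈ univ.filter (fun e : Fin s => (e : ℕ) ≠ 0),
              mu e ^ t * (x i b (Function.update a i e)
                + x i B (Function.update (Function.update a i e) ij bF)) = 0 := by
      intro t ht a ha
      have hb0 := hx t ht b hb (by omega) a
      rw [hsplit a ha] at hb0
      have hBB := hx t ht B hB1 hB2 (Function.update a ij bF)
      have hfQ : univ.filter
            (fun i : Fin n => ((Function.update a ij bF i : Fin s) : ℕ) = 0)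
          = univ.filter (fun i : Fin n => i ≠ ij ∧ (a i : ℕ) = 0) := by
        ext i
        by_cases hi : i = ij
        · subst hi; simp [Function.update_self, hbF0]
        · simp [Function.update_of_ne hi, hi]
      rw [hfQ] at hBB
      have hcomm : ∑ i ∈ univ.filter (fun i : Fin n => i ≠ ij ∧ (a i : ℕ) = 0),
            ∑ e ∈ univ.filter (fun e : Fin s => (e : ℕ) ≠ 0),
              mu e ^ t * x i B (Function.update (Function.update a ij bF) i e)
          = ∑ i ∈ univ.filter (fun i : Fin n => i ≠ ij ∧ (a i : ℕ) = 0),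
            ∑ e ∈ univ.filter (fun e : Fin s => (e : ℕ) ≠ 0),
              mu e ^ t * x i B (Function.update (Function.update a i e) ij bF) := by
        apply Finset.sum_congr rfl
        intro i hi
        apply Finset.sum_congr rfl
        intro e _
        rw [Function.update_comm ((Finset.mem_filter.mp hi).2.1)]
      rw [hcomm] at hBB
      simp only [mul_add, Finset.sum_add_distrib]
      linear_combination hb0 + hBB
    exact key_lemma lam mu hlam hmu hlammu R ij hcard hs0
      (fun i a => x i b a + x i B (Function.update a ij bF))
      (fun e a => x ij b (Function.update a ij e))
      heq2
      (fun u hu a ha => by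
        have h5 := hD2 u hu b hb hb' a ha
        simp only [hxdef]
        linear_combination h5)
  -- x vanishes at layer B, node ij, for ALL a
  have hxB : ∀ a : Fin n → Fin s, x ij B a = 0 := by
    intro a
    by_cases ha : (a ij : ℕ) = 0
    · exact (A1 a ha).1 ij
    · have h2 : x ij B (Function.update (Function.update a ij ⟨0, hs0⟩) ij (a ij)) = 0 :=
        (A1 (Function.update a ij ⟨0, hs0⟩) (by simp)).2 (a ij) ha
      rwa [Function.update_idem, Function.update_eq_self] at h2
  -- x vanishes at layers b ∈ [1, d-k], node ij, for ALL a
  have hxb : ∀ (b : ℕ), 1 ≤ b → b ≤ d - k → ∀ a : Fin n → Fin s, x ij b a = 0 := by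
    intro b hb hb' a
    by_cases ha : (a ij : ℕ) = 0
    · have h1 := (A2 b hb hb' a ha).1 ij
      have h2 := hxB (Function.update a ij ⟨b, hsb b hb'⟩)
      linear_combination h1 - h2
    · have h2 : x ij b (Function.update (Function.update a ij ⟨0, hs0⟩) ij (a ij)) = 0 :=
        (A2 b hb hb' (Function.update a ij ⟨0, hs0⟩) (by simp)).2 (a ij) ha
      rwa [Function.update_idem, Function.update_eq_self] at h2
  refine ⟨?_, ?_, ?_⟩
  · intro b hb a
    rcases hb with ⟨hb1, hb2⟩ | rfl
    · exact sub_eq_zero.mp (hxb b hb1 hb2 a)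
    · exact sub_eq_zero.mp (hxB a)
  · intro l _ a ha
    exact sub_eq_zero.mp ((A1 a ha).1 (idx l))
  · intro l _ b hb hb' a ha
    have h6 := (A2 b hb hb' a ha).1 (idx l)
    simp only [hxdef] at h6
    linear_combination h6
end

section
/- (Cooperative phase recovery step) Assume h ≥ 2. Fix distinct indices p, q ∈ {0, …, n−1} (the failed node p = i_j and another failed node i_l with i_l = q) and l ∈ {1, …, h}. If two codewords c, c' ∈ C satisfy: (i) c_{p,b,a} = c'_{p,b,a} for all b ∈ {1, …, d−k} and all a ∈ {0, …, s−1}^n; (ii) c_{p,d−k+l,a} = c'_{p,d−k+l,a} for all a ∈ V_q; and (iii) c_{p,b,a} + c_{p,d−k+l,a(q,b)} = c'_{p,b,a} + c'_{p,d−k+l,a(q,b)} for all b ∈ {1, …, d−k} and all a ∈ V_q; then c_{p,d−k+l,a} = c'_{p,d−k+l,a} for all a ∈ {0, …, s−1}^n. -/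
open Finset

open Function

-- Off the fiber, `a = update (update a q z) q (a q)` with `update a q z` on the fiber.
theorem eq_of_eq_on_fiber_of_add_update_eq {ι α M : Type*} [DecidableEq ι]
    [AddLeftCancelSemigroup M] (q : ι) (z : α) {f f' : α → (ι → α) → M} {g g' : (ι → α) → M}
    (hg : ∀ a, a q = z → g a = g' a)
    (hf : ∀ a, a q = z → ∀ v ≠ z, f v a = f' v a)
    (hfg : ∀ a, a q = z → ∀ v ≠ z, f v a + g (update a q v) = f' v a + g' (update a q v))
    (a : ι → α) : g a = g' a := by
  by_cases ha : a q = z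
  · exact hg a ha
  · have hfiber : update a q z q = z := update_self q z a
    have hsum := hfg _ hfiber (a q) ha
    rwa [update_idem, update_eq_self, hf _ hfiber (a q) ha, add_right_inj] at hsum

theorem cooperative_phase_step
    {F : Type*} [Field F]
    (n k d s : ℕ)
    (hs : s = d - k + 1)
    (c c' : Fin n → ℕ → (Fin n → Fin s) → F)
    (p q : Fin n)
    (l : ℕ)
    (h1 : ∀ (b : ℕ) (hb : 1 ≤ b) (hb' : b ≤ d - k), ∀ a : Fin n → Fin s,
      c p b a = c' p b a)
    (h2 : ∀ a : Fin n → Fin s, (a q : ℕ) = 0 →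
      c p (d - k + l) a = c' p (d - k + l) a)
    (h3 : ∀ (b : ℕ) (hb : 1 ≤ b) (hb' : b ≤ d - k), ∀ a : Fin n → Fin s,
      (a q : ℕ) = 0 →
        c p b a + c p (d - k + l) (Function.update a q ⟨b, by omega⟩)
          = c' p b a + c' p (d - k + l) (Function.update a q ⟨b, by omega⟩)) :
    ∀ a : Fin n → Fin s, c p (d - k + l) a = c' p (d - k + l) a := by
  have hlayer : ∀ v : Fin s, v ≠ ⟨0, by omega⟩ → 1 ≤ (v : ℕ) ∧ (v : ℕ) ≤ d - k := fun v hv =>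
    ⟨Nat.one_le_iff_ne_zero.mpr fun h => hv (Fin.ext h), by omega⟩
  refine eq_of_eq_on_fiber_of_add_update_eq (f := fun v => c p v) (f' := fun v => c' p v)
    q ⟨0, by omega⟩ (fun a ha => h2 a (congrArg Fin.val ha)) ?_ ?_
  · exact fun a _ v hv => h1 v (hlayer v hv).1 (hlayer v hv).2 a
  · exact fun a ha v hv => h3 v (hlayer v hv).1 (hlayer v hv).2 a (congrArg Fin.val ha)
end
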